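/- arXiv:1212.0453 — 5 statements merged into one kernel-verified Lean document; each statement's English description precedes it below -/
import Mathlib

section
/- Fix t ∈ [0,1] and define α_t⁰ : [0,1]×[0,1] → [0,1]×[0,1] by α_t⁰(x,y) = (x,y) if |x−y| ≥ t and α_t⁰(x,y) = (y,x) if |x−y| < t. Then α_t⁰ is a measurable involution (α_t⁰ ∘ α_t⁰ = id) that preserves two-dimensional Lebesgue measure on [0,1]×[0,1]; moreover α_0⁰ = id, and α_1⁰(x,y) = (y,x) for Lebesgue-almost every (x,y) ∈ [0,1]×[0,1]. -/
open MeasureTheory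

/-- The flip map `α_t⁰` on the square: identity where `|x - y| ≥ t`, coordinate swap
where `|x - y| < t`. -/
noncomputable def flipMap (t : ℝ) (p : ℝ × ℝ) : ℝ × ℝ :=
  if t ≤ |p.1 - p.2| then p else (p.2, p.1)

/-- Two-dimensional Lebesgue measure restricted to the unit square `[0,1] × [0,1]`. -/
noncomputable def squareMeasure : Measure (ℝ × ℝ) :=
  (volume : Measure (ℝ × ℝ)).restrict (Set.Icc 0 1 ×ˢ Set.Icc 0 1)

lemma flipMap_measurable (t : ℝ) : Measurable (flipMap t) := by
  unfold flipMap
  exact Measurable.ite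
    (measurableSet_le measurable_const (measurable_fst.sub measurable_snd).abs)
    measurable_id (measurable_snd.prodMk measurable_fst)

lemma swap_mp : MeasurePreserving (Prod.swap : ℝ × ℝ → ℝ × ℝ) volume volume := by
  rw [Measure.volume_eq_prod]
  exact Measure.measurePreserving_swap

lemma flipMap_map_volume (t : ℝ) :
    Measure.map (flipMap t) (volume : Measure (ℝ × ℝ)) = volume := by
  set A : Set (ℝ × ℝ) := {p | t ≤ |p.1 - p.2|} with hA
  have hAm : MeasurableSet A :=
    measurableSet_le measurable_const (measurable_fst.sub measurable_snd).abs
  have hswapA : Prod.swap ⁻¹' Aᶜ = Aᶜ := by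
    ext p; simp [hA, abs_sub_comm]
  ext s hs
  rw [Measure.map_apply (flipMap_measurable t) hs]
  have hpre : flipMap t ⁻¹' s = (s ∩ A) ∪ (Prod.swap ⁻¹' s ∩ Aᶜ) := by
    ext p
    by_cases h : t ≤ |p.1 - p.2| <;>
      simp [flipMap, h, hA, Set.mem_preimage, Prod.swap]
  rw [hpre, measure_union _ ((measurable_swap hs).inter hAm.compl)]
  · have : Prod.swap ⁻¹' s ∩ Aᶜ = Prod.swap ⁻¹' (s ∩ Aᶜ) := by
      rw [Set.preimage_inter, hswapA]
    rw [this, swap_mp.measure_preimage (hs.inter hAm.compl).nullMeasurableSet]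
    rw [← Set.diff_eq, measure_inter_add_diff s hAm]
  · exact Set.disjoint_of_subset (Set.inter_subset_right)
      (Set.inter_subset_right) (disjoint_compl_right)

/-- for `t ∈ [0,1]`, `α_t⁰` is a measurable involution preserving
Lebesgue measure on the unit square; `α_0⁰ = id` and `α_1⁰` equals the flip a.e. -/
theorem stmt0 (t : ℝ) (ht : t ∈ Set.Icc (0 : ℝ) 1) :
    Measurable (flipMap t) ∧
    (flipMap t ∘ flipMap t = id) ∧
    Measure.map (flipMap t) squareMeasure = squareMeasure ∧
    flipMap 0 = id ∧
    flipMap 1 =ᵐ[squareMeasure] (fun p : ℝ × ℝ => (p.2, p.1)) := by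
  refine ⟨flipMap_measurable t, ?_, ?_, ?_, ?_⟩
  · funext p
    by_cases h : t ≤ |p.1 - p.2|
    · simp [flipMap, h]
    · have h' : ¬ t ≤ |p.2 - p.1| := by rwa [abs_sub_comm]
      simp [flipMap, h, h']
  · have hQ : MeasurableSet (Set.Icc (0:ℝ) 1 ×ˢ Set.Icc (0:ℝ) 1) :=
      (measurableSet_Icc).prod measurableSet_Icc
    have hpreQ : flipMap t ⁻¹' (Set.Icc (0:ℝ) 1 ×ˢ Set.Icc (0:ℝ) 1)
        = Set.Icc (0:ℝ) 1 ×ˢ Set.Icc (0:ℝ) 1 := by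
      ext p
      by_cases h : t ≤ |p.1 - p.2|
      · simp [flipMap, h]
      · simp only [flipMap, h, if_false, Set.mem_preimage, Set.mem_prod]
        tauto
    rw [squareMeasure, ← hpreQ, ← Measure.restrict_map (flipMap_measurable t) hQ,
      flipMap_map_volume, hpreQ]
  · funext p
    simp [flipMap, abs_nonneg]
  · have hQ : MeasurableSet (Set.Icc (0:ℝ) 1 ×ˢ Set.Icc (0:ℝ) 1) :=
      (measurableSet_Icc).prod measurableSet_Icc
    have key : {p : ℝ × ℝ | ¬ flipMap 1 p = (p.2, p.1)} ∩ (Set.Icc 0 1 ×ˢ Set.Icc 0 1)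
        ⊆ ({((0:ℝ),(1:ℝ)), ((1:ℝ),(0:ℝ))} : Set (ℝ × ℝ)) := by
      rintro ⟨x, y⟩ ⟨hne, hx, hy⟩
      simp only [Set.mem_setOf_eq] at hne
      simp only [Set.mem_Icc] at hx hy
      by_cases h : (1:ℝ) ≤ |x - y|
      · have h1 : |x - y| ≤ 1 := abs_sub_le_iff.mpr ⟨by linarith [hx.1, hx.2, hy.1, hy.2],
          by linarith [hx.1, hx.2, hy.1, hy.2]⟩
        have heq : |x - y| = 1 := le_antisymm h1 h
        rcases (abs_eq (by norm_num : (0:ℝ) ≤ 1)).mp heq with h2 | h2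
        · have : x = 1 ∧ y = 0 := ⟨by linarith [hx.2, hy.1], by linarith [hx.2, hy.1]⟩
          simp [this.1, this.2]
        · have : x = 0 ∧ y = 1 := ⟨by linarith [hx.1, hy.2], by linarith [hx.1, hy.2]⟩
          simp [this.1, this.2]
      · exact absurd (by simp [flipMap, h]) hne
    rw [Filter.EventuallyEq, ae_iff]
    rw [squareMeasure, Measure.restrict_apply' hQ]
    refine measure_mono_null key ?_
    have hsing : ∀ a b : ℝ, volume ({(a, b)} : Set (ℝ × ℝ)) = 0 := by
      intro a b
      rw [← Set.singleton_prod_singleton, Measure.volume_eq_prod, Measure.prod_prod,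
        Real.volume_singleton, zero_mul]
    refine measure_union_null ?_ (hsing 1 0)
    exact hsing 0 1
end

section
/- Let Γ be a countable group and equip X̃ = ([0,1]×[0,1])^Γ with the product over Γ of two-dimensional Lebesgue measure on the unit square. For t ∈ [0,1] define α_t : X̃ → X̃ coordinatewise by α_t((x_h)_{h∈Γ}) = (α_t⁰(x_h))_{h∈Γ}, where α_t⁰(x,y) = (x,y) if |x−y| ≥ t and (y,x) if |x−y| < t. Then: (i) each α_t preserves the product measure on X̃; (ii) each α_t commutes with the Bernoulli shift action of Γ on X̃ given by (g·x)_h = x_{g⁻¹h}, i.e. α_t(g·x) = g·α_t(x) for all g ∈ Γ and all x; (iii) α_0 = id; and (iv) α_1 agrees almost everywhere with the coordinatewise flip (x_h, y_h)_{h∈Γ} ↦ (y_h, x_h)_{h∈Γ}, i.e. under the canonical identification X̃ = X × X with X = [0,1]^Γ, α_1 is a.e. equal to the flip (x,y) ↦ (y,x). (This is Popa's malleability of Bernoulli actions.) -/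
open MeasureTheory

/-- `μ` is the product over `ι` of copies of `μ₀`: every finite-dimensional cylinder has
measure equal to the corresponding finite product. -/
def IsProductMeasure {ι X₀ : Type*} [MeasurableSpace X₀] (μ₀ : Measure X₀)
    (μ : Measure (ι → X₀)) : Prop :=
  ∀ (s : Finset ι) (A : ι → Set X₀), (∀ i ∈ s, MeasurableSet (A i)) →
    μ {x | ∀ i ∈ s, x i ∈ A i} = ∏ i ∈ s, μ₀ (A i)

/-- The coordinatewise flip `α_t` on `([0,1]²)^Γ`. -/
noncomputable def bigFlip (Γ : Type*) (t : ℝ) (x : Γ → ℝ × ℝ) : Γ → ℝ × ℝ :=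
  fun h => flipMap t (x h)

/-- The Bernoulli shift action `(g · x)_h = x_{g⁻¹ h}`. -/
def bernoulliShift (Γ : Type*) [Group Γ] (g : Γ) (x : Γ → ℝ × ℝ) : Γ → ℝ × ℝ :=
  fun h => x (g⁻¹ * h)

/-!
A product measure is determined by its values on square cylinders, so a coordinatewise map
`x ↦ (f (x_h))_h` preserves it as soon as `f` preserves the base measure. On the square,
`α_t⁰` is the swap on the swap-invariant set `{|x - y| < t}` and the identity elsewhere, hence
preserves Lebesgue measure. Commuting with the shift is immediate since `α_t` acts coordinatewise,
and `α_1` differs from the flip only where some coordinate lies on the null set `{|x - y| = 1}`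
of the square; there are countably many coordinates.
-/

open Set

namespace IsProductMeasure

variable {ι X₀ : Type*} [MeasurableSpace X₀] {μ₀ : Measure X₀}
  {μ : Measure (ι → X₀)}

theorem isProbabilityMeasure (hμ : IsProductMeasure μ₀ μ) : IsProbabilityMeasure μ :=
  ⟨by simpa using hμ ∅ (fun _ => univ) (by simp)⟩

theorem unique (hμ : IsProductMeasure μ₀ μ) {ν : Measure (ι → X₀)}
    (hν : IsProductMeasure μ₀ ν) : μ = ν := by
  have := hμ.isProbabilityMeasure
  have := hν.isProbabilityMeasure
  refine ext_of_generate_finite _ generateFrom_squareCylinders.symm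
    (isPiSystem_squareCylinders (fun _ => MeasurableSpace.isPiSystem_measurableSet)
      fun _ => .univ) ?_ (by simp)
  rintro _ ⟨s, A, hA, rfl⟩
  exact (hμ s A fun i _ => hA i trivial).trans (hν s A fun i _ => hA i trivial).symm

theorem map {Y₀ : Type*} [MeasurableSpace Y₀] (hμ : IsProductMeasure μ₀ μ)
    {f : X₀ → Y₀} (hf : Measurable f) :
    IsProductMeasure (μ₀.map f) (μ.map fun x i => f (x i)) := by
  intro s A hA
  have hF : Measurable fun (x : ι → X₀) i => f (x i) :=
    measurable_pi_lambda _ fun i => hf.comp (measurable_pi_apply i)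
  have hcyl : MeasurableSet {y : ι → Y₀ | ∀ i ∈ s, y i ∈ A i} :=
    MeasurableSet.pi s.countable_toSet hA
  rw [Measure.map_apply hF hcyl, Finset.prod_congr rfl fun i hi => Measure.map_apply hf (hA i hi)]
  exact hμ s _ fun i hi => hf (hA i hi)

theorem measurePreserving_pi_map (hμ : IsProductMeasure μ₀ μ) {f : X₀ → X₀}
    (hf : MeasurePreserving f μ₀ μ₀) : MeasurePreserving (fun x i => f (x i)) μ μ := by
  refine ⟨measurable_pi_lambda _ fun i => hf.measurable.comp (measurable_pi_apply i), ?_⟩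
  have hmap := hμ.map hf.measurable
  rw [hf.map_eq] at hmap
  exact hmap.unique hμ

theorem measurePreserving_eval (hμ : IsProductMeasure μ₀ μ) (i : ι) :
    MeasurePreserving (fun x => x i) μ μ₀ := by
  refine ⟨measurable_pi_apply i, Measure.ext fun A hA => ?_⟩
  rw [Measure.map_apply (measurable_pi_apply i) hA]
  simpa [preimage] using hμ {i} (fun _ => A) (by simpa using hA)

theorem ae_forall [Countable ι] (hμ : IsProductMeasure μ₀ μ) {P : X₀ → Prop}
    (hP : ∀ᵐ p ∂μ₀, P p) : ∀ᵐ x ∂μ, ∀ i, P (x i) :=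
  ae_all_iff.2 fun i => (hμ.measurePreserving_eval i).quasiMeasurePreserving.ae hP

end IsProductMeasure

theorem MeasureTheory.MeasurePreserving.piecewise_id {α : Type*} [MeasurableSpace α]
    {μ : Measure α} {f : α → α} (hf : MeasurePreserving f μ μ) {S : Set α}
    [DecidablePred (· ∈ S)] (hS : MeasurableSet S) (hfS : f ⁻¹' S = S) :
    MeasurePreserving (S.piecewise id f) μ μ := by
  refine ⟨measurable_id.piecewise hS hf.measurable, Measure.ext fun A hA => ?_⟩
  have hdiff : μ (f ⁻¹' A \ S) = μ (A \ S) := by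
    rw [← hfS, ← preimage_sdiff, hfS, hf.measure_preimage (hA.diff hS).nullMeasurableSet]
  rw [Measure.map_apply (measurable_id.piecewise hS hf.measurable) hA, piecewise_preimage,
    Set.ite, preimage_id, measure_union (disjoint_sdiff_right.mono_left inter_subset_right)
      ((hf.measurable hA).diff hS), hdiff, measure_inter_add_sdiff A hS]

theorem measurePreserving_swap_squareMeasure :
    MeasurePreserving Prod.swap squareMeasure squareMeasure := by
  have hsquare : MeasurableSet (Icc (0 : ℝ) 1 ×ˢ Icc (0 : ℝ) 1) :=
    measurableSet_Icc.prod measurableSet_Icc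
  have h := (Measure.measurePreserving_swap (μ := (volume : Measure ℝ)) (ν := volume)
    ).restrict_preimage hsquare
  rwa [preimage_swap_prod, ← Measure.volume_eq_prod] at h

theorem measurableSet_le_abs_sub (t : ℝ) : MeasurableSet {p : ℝ × ℝ | t ≤ |p.1 - p.2|} :=
  measurableSet_le measurable_const (measurable_fst.sub measurable_snd).abs

theorem flipMap_eq_piecewise (t : ℝ) :
    flipMap t = {p : ℝ × ℝ | t ≤ |p.1 - p.2|}.piecewise id Prod.swap := by
  classical
  funext p
  simp only [flipMap, piecewise, mem_ofPred_eq, id, Prod.swap]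

theorem measurePreserving_flipMap (t : ℝ) :
    MeasurePreserving (flipMap t) squareMeasure squareMeasure := by
  classical
  rw [flipMap_eq_piecewise]
  refine measurePreserving_swap_squareMeasure.piecewise_id (measurableSet_le_abs_sub t) ?_
  ext p
  simp [abs_sub_comm]

theorem squareMeasure_one_le_abs_sub : squareMeasure {p | 1 ≤ |p.1 - p.2|} = 0 := by
  have hsub : {p : ℝ × ℝ | 1 ≤ |p.1 - p.2|} ∩ Icc 0 1 ×ˢ Icc 0 1 ⊆
      ({0, 1} : Set ℝ) ×ˢ univ := by
    rintro ⟨a, b⟩ ⟨hab, ⟨ha0, ha1⟩, hb0, hb1⟩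
    dsimp only at ha0 ha1 hb0 hb1
    rcases le_abs'.1 (show 1 ≤ |a - b| from hab) with h | h
    · exact ⟨Or.inl (show a = 0 by linarith), trivial⟩
    · exact ⟨Or.inr (show a = 1 by linarith), trivial⟩
  rw [squareMeasure, Measure.restrict_apply (measurableSet_le_abs_sub 1)]
  refine measure_mono_null hsub ?_
  rw [Measure.volume_eq_prod, Measure.prod_prod, (toFinite _).measure_zero, zero_mul]

theorem ae_flipMap_one_eq_swap : ∀ᵐ p ∂squareMeasure, flipMap 1 p = p.swap := by
  have h : ∀ᵐ p ∂squareMeasure, |p.1 - p.2| < 1 :=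
    ae_iff.2 (by simpa only [not_lt] using squareMeasure_one_le_abs_sub)
  filter_upwards [h] with p hp
  exact if_neg hp.not_ge

theorem stmt2_general (Γ : Type*) [Group Γ] [Countable Γ]
    (μ : Measure (Γ → ℝ × ℝ)) (hμ : IsProductMeasure squareMeasure μ)
    (t : ℝ) :
    MeasurePreserving (bigFlip Γ t) μ μ ∧
    (∀ (g : Γ) (x : Γ → ℝ × ℝ),
      bigFlip Γ t (bernoulliShift Γ g x) = bernoulliShift Γ g (bigFlip Γ t x)) ∧
    bigFlip Γ 0 = id ∧
    bigFlip Γ 1 =ᵐ[μ] (fun x h => ((x h).2, (x h).1)) := by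
  refine ⟨hμ.measurePreserving_pi_map (measurePreserving_flipMap t), fun _ _ => rfl, ?_, ?_⟩
  · exact funext fun x => funext fun h => if_pos (abs_nonneg _)
  · filter_upwards [hμ.ae_forall ae_flipMap_one_eq_swap] with x hx
    exact funext hx

/-- Popa's malleability of Bernoulli actions: each `α_t` preserves the
product measure, commutes with the Bernoulli shift, `α_0 = id`, and `α_1` agrees
almost everywhere with the coordinatewise flip. -/
theorem stmt2 (Γ : Type*) [Group Γ] [Countable Γ]
    (μ : Measure (Γ → ℝ × ℝ)) (hμ : IsProductMeasure squareMeasure μ)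
    (t : ℝ) (ht : t ∈ Set.Icc (0 : ℝ) 1) :
    MeasurePreserving (bigFlip Γ t) μ μ ∧
    (∀ (g : Γ) (x : Γ → ℝ × ℝ),
      bigFlip Γ t (bernoulliShift Γ g x) = bernoulliShift Γ g (bigFlip Γ t x)) ∧
    bigFlip Γ 0 = id ∧
    bigFlip Γ 1 =ᵐ[μ] (fun x h => ((x h).2, (x h).1)) :=
  stmt2_general Γ μ hμ t
end

section
/- Let Γ be a countable group acting on a countable set I such that every Γ-orbit in I is infinite, and let (X₀,μ₀) be a standard Borel probability space. Then the generalized Bernoulli action of Γ on the product probability space (X₀^I, μ₀^{⊗I}), given by (g·x)_i = x_{g⁻¹·i}, is measure preserving and ergodic: every measurable set A ⊆ X₀^I with μ(g·A Δ A) = 0 for all g ∈ Γ has μ(A) ∈ {0,1}. -/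
/-! Approximate an almost invariant set `A` by a cylinder `B` depending on the coordinates in a
finite set `F`. Since all orbits are infinite, Neumann's lemma on coset coverings gives `g` moving
`F` off itself, so `B` and its translate `g • B` are independent, and both approximate `A`. Hence
`μ A ≈ μ (B ∩ g • B) = μ B ^ 2 ≈ μ A ^ 2`, forcing `μ A ∈ {0, 1}`. -/

open MeasureTheory

open ProbabilityTheory Set
open scoped symmDiff Pointwise

theorem exists_forall_smul_notMem {Γ I : Type*} [Group Γ] [MulAction Γ I] (F : Finset I)
    (hF : ∀ i ∈ F, (MulAction.orbit Γ i).Infinite) : ∃ g : Γ, ∀ i ∈ F, g • i ∉ F := by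
  -- Otherwise `Γ` is covered by the finitely many sets `{γ | γ • i = j}`, `i j ∈ F`, each empty or
  -- a left coset of `stabilizer Γ i`; by Neumann's lemma one stabilizer has finite index.
  by_contra! hcover
  have hcoset : ∀ p : I × I, ∃ g : Γ, ∀ γ : Γ, γ • p.1 = p.2 →
      γ ∈ g • (MulAction.stabilizer Γ p.1 : Set Γ) := by
    intro p
    by_cases hp : ∃ γ₀ : Γ, γ₀ • p.1 = p.2
    · obtain ⟨γ₀, hγ₀⟩ := hp
      refine ⟨γ₀, fun γ hγ => ?_⟩
      rw [mem_smul_set_iff_inv_smul_mem, smul_eq_mul, SetLike.mem_coe,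
        MulAction.mem_stabilizer_iff, mul_smul, inv_smul_eq_iff, hγ, hγ₀]
    · exact ⟨1, fun γ hγ => (hp ⟨γ, hγ⟩).elim⟩
  choose g hg using hcoset
  have hunion : ⋃ p ∈ F ×ˢ F, g p • (MulAction.stabilizer Γ p.1 : Set Γ) = univ := by
    refine eq_univ_of_forall fun γ => ?_
    obtain ⟨i, hi, hγi⟩ := hcover γ
    exact mem_biUnion (Finset.mem_product.mpr ⟨hi, hγi⟩) (hg (i, γ • i) γ rfl)
  obtain ⟨p, hp, hfin⟩ := Subgroup.exists_finiteIndex_of_leftCoset_cover hunion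
  have : Finite (MulAction.orbit Γ p.1) :=
    .of_equiv _ (MulAction.orbitEquivQuotientStabilizer Γ p.1).symm
  exact hF p.1 (Finset.mem_product.mp hp).1 (toFinite _)

theorem measure_eq_zero_or_one_of_forall_indep_approx {α : Type*} [MeasurableSpace α]
    {μ : Measure α} [IsProbabilityMeasure μ] {A : Set α} (hA : MeasurableSet A)
    (h : ∀ ε : ℝ, 0 < ε → ∃ B C : Set α, MeasurableSet B ∧ MeasurableSet C ∧
      μ (B ∩ C) = μ B * μ C ∧ μ (A ∆ B) < ENNReal.ofReal ε ∧ μ (A ∆ C) < ENNReal.ofReal ε) :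
    μ A = 0 ∨ μ A = 1 := by
  have hidem : μ.real A * μ.real A = μ.real A := by
    refine eq_of_forall_dist_le fun ε hε => ?_
    obtain ⟨B, C, hB, hC, hBC, hAB, hAC⟩ := h (ε / 4) (by positivity)
    replace hAB : μ.real (A ∆ B) ≤ ε / 4 := ENNReal.toReal_le_of_le_ofReal (by positivity) hAB.le
    replace hAC : μ.real (A ∆ C) ≤ ε / 4 := ENNReal.toReal_le_of_le_ofReal (by positivity) hAC.le
    replace hBC : μ.real (B ∩ C) = μ.real B * μ.real C := by
      simp only [measureReal_def, hBC, ENNReal.toReal_mul]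
    have hb := abs_le.mp ((abs_measureReal_sub_le_measureReal_symmDiff hA.nullMeasurableSet
      hB.nullMeasurableSet).trans hAB)
    have hc := abs_le.mp ((abs_measureReal_sub_le_measureReal_symmDiff hA.nullMeasurableSet
      hC.nullMeasurableSet).trans hAC)
    have hbc : |μ.real A - μ.real B * μ.real C| ≤ ε / 2 := by
      have hsub : A ∆ (B ∩ C) ⊆ A ∆ B ∪ A ∆ C := fun x => by
        simp only [mem_symmDiff, mem_inter_iff, mem_union]; tauto
      calc |μ.real A - μ.real B * μ.real C| ≤ μ.real (A ∆ (B ∩ C)) :=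
            hBC ▸ abs_measureReal_sub_le_measureReal_symmDiff hA.nullMeasurableSet
              (hB.inter hC).nullMeasurableSet
        _ ≤ μ.real (A ∆ B) + μ.real (A ∆ C) :=
            (measureReal_mono hsub).trans (measureReal_union_le _ _)
        _ ≤ ε / 2 := by linarith
    -- `μ B * μ C` is within `ε / 2` of `μ A * μ A` since all three lie in `[0, 1]`
    have hbc' := abs_le.mp hbc
    have ha0 := measureReal_nonneg (μ := μ) (s := A)
    have ha1 := measureReal_le_one (μ := μ) (s := A)
    have hc0 := measureReal_nonneg (μ := μ) (s := C)
    have hc1 := measureReal_le_one (μ := μ) (s := C)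
    rw [Real.dist_eq, abs_le]
    constructor <;> nlinarith
  rcases mul_left_eq_self₀.mp hidem with h1 | h0
  · exact Or.inr ((ENNReal.toReal_eq_one_iff _).mp h1)
  · exact Or.inl ((measureReal_eq_zero_iff).mp h0)

theorem MeasureTheory.MeasurePreserving.measure_symmDiff_preimage_le {α : Type*}
    [MeasurableSpace α] {μ : Measure α} {T : α → α} (hT : MeasurePreserving T μ μ)
    {A B : Set α} (hA : μ ((T ⁻¹' A) ∆ A) = 0) (hAB : NullMeasurableSet (A ∆ B) μ) :
    μ (A ∆ (T ⁻¹' B)) ≤ μ (A ∆ B) :=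
  calc μ (A ∆ (T ⁻¹' B)) ≤ μ (A ∆ (T ⁻¹' A)) + μ ((T ⁻¹' A) ∆ (T ⁻¹' B)) :=
        measure_symmDiff_le _ _ _
    _ = μ (A ∆ B) := by
      rw [symmDiff_comm A, hA, zero_add, ← preimage_symmDiff, hT.measure_preimage hAB]

theorem exists_cylinder_measure_symmDiff_lt {ι : Type*} {X : ι → Type*}
    [∀ i, MeasurableSpace (X i)] (μ : Measure (∀ i, X i)) [IsFiniteMeasure μ]
    {A : Set (∀ i, X i)} (hA : MeasurableSet A) {ε : ℝ} (hε : 0 < ε) :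
    ∃ (s : Finset ι) (S : Set (∀ i : s, X i)), MeasurableSet S ∧
      μ (A ∆ cylinder s S) < ENNReal.ofReal ε := by
  obtain ⟨B, hB, hAB⟩ := (Measure.MeasureDense.of_generateFrom_isSetAlgebra_finite μ
    isSetAlgebra_measurableCylinders generateFrom_measurableCylinders.symm).approx
      A hA (measure_ne_top μ A) ε hε
  obtain ⟨s, S, hS, rfl⟩ := (mem_measurableCylinders B).mp hB
  exact ⟨s, S, hS, hAB⟩

theorem IsProductMeasure.eq_infinitePi {ι X₀ : Type*} [MeasurableSpace X₀] {μ₀ : Measure X₀}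
    [IsProbabilityMeasure μ₀] {μ : Measure (ι → X₀)} (hμ : IsProductMeasure μ₀ μ) :
    μ = Measure.infinitePi fun _ => μ₀ :=
  Measure.eq_infinitePi _ fun s t ht => hμ s t fun i _ => ht i

theorem measurePreserving_comp_infinitePi {ι α : Type*} {X : ι → Type*}
    [∀ i, MeasurableSpace (X i)] (μ : ∀ i, Measure (X i)) [∀ i, IsProbabilityMeasure (μ i)]
    (e : α ≃ ι) :
    MeasurePreserving (fun (x : ∀ i, X i) a => x (e a)) (Measure.infinitePi μ)
      (Measure.infinitePi fun a => μ (e a)) :=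
  MeasurePreserving.symm _
    ⟨(MeasurableEquiv.piCongrLeft X e).measurable, Measure.infinitePi_map_piCongrLeft μ e⟩

theorem infinitePi_cylinder_inter_preimage_comp_eq_mul {ι X₀ : Type*} [MeasurableSpace X₀]
    (μ₀ : Measure X₀) [IsProbabilityMeasure μ₀] {σ : ι → ι} {s : Finset ι}
    (hσ : ∀ i ∈ s, σ i ∉ s) {S T : Set (s → X₀)} (hS : MeasurableSet S)
    (hT : MeasurableSet T) :
    Measure.infinitePi (fun _ => μ₀) (cylinder s S ∩ (fun x i => x (σ i)) ⁻¹' cylinder s T) =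
      Measure.infinitePi (fun _ => μ₀) (cylinder s S) *
        Measure.infinitePi (fun _ => μ₀) ((fun x i => x (σ i)) ⁻¹' cylinder s T) := by
  classical
  have hdisj : Disjoint s (s.image σ) := by
    simp only [Finset.disjoint_right, Finset.mem_image]
    rintro _ ⟨i, hi, rfl⟩
    exact hσ i hi
  have hindep := (iIndepFun_infinitePi (P := fun _ : ι => μ₀) (X := fun _ => id)
    fun _ => measurable_id).indepFun_finset s (s.image σ) hdisj fun _ => by fun_prop
  -- `(x ∘ σ)` restricted to `s` factors through `x` restricted to `σ '' s`
  let φ : (s.image σ → X₀) → (s → X₀) := fun y i => y ⟨σ i, Finset.mem_image_of_mem σ i.2⟩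
  have hφ : Measurable φ := by fun_prop
  exact (hindep.comp measurable_id hφ).measure_inter_preimage_eq_mul S T hS hT

theorem image_comp_inv_smul_eq_preimage {Γ I X : Type*} [Group Γ] [MulAction Γ I] (g : Γ)
    (A : Set (I → X)) :
    (fun (x : I → X) i => x (g⁻¹ • i)) '' A = (fun (x : I → X) i => x (g • i)) ⁻¹' A :=
  congrFun (image_eq_preimage_of_inverse (f := fun (x : I → X) i => x (g⁻¹ • i))
    (g := fun x i => x (g • i)) (fun x => funext fun i => by simp)
    (fun x => funext fun i => by simp)) A

theorem stmt6_general (Γ : Type*) [Group Γ]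
    (I : Type*) [MulAction Γ I]
    (horb : ∀ i : I, (MulAction.orbit Γ i).Infinite)
    (X₀ : Type*) [MeasurableSpace X₀]
    (μ₀ : Measure X₀) [IsProbabilityMeasure μ₀]
    (μ : Measure (I → X₀)) (hμ : IsProductMeasure μ₀ μ) :
    (∀ g : Γ, MeasurePreserving (fun (x : I → X₀) (i : I) => x (g⁻¹ • i)) μ μ) ∧
    (∀ A : Set (I → X₀), MeasurableSet A →
      (∀ g : Γ, μ (symmDiff ((fun (x : I → X₀) (i : I) => x (g⁻¹ • i)) '' A) A) = 0) →
      μ A = 0 ∨ μ A = 1) := by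
  obtain rfl := hμ.eq_infinitePi
  have hshift (g : Γ) : MeasurePreserving (fun (x : I → X₀) i => x (g • i))
      (Measure.infinitePi fun _ => μ₀) (Measure.infinitePi fun _ => μ₀) :=
    measurePreserving_comp_infinitePi _ (MulAction.toPerm g)
  refine ⟨fun g => hshift g⁻¹, fun A hA hinv => ?_⟩
  refine measure_eq_zero_or_one_of_forall_indep_approx hA fun ε hε => ?_
  obtain ⟨s, S, hS, hAS⟩ :=
    exists_cylinder_measure_symmDiff_lt (Measure.infinitePi fun _ => μ₀) hA hε
  obtain ⟨g, hg⟩ := exists_forall_smul_notMem s fun i _ => horb i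
  have hAg := image_comp_inv_smul_eq_preimage g A ▸ hinv g
  have hcyl : MeasurableSet (cylinder s S) := MeasurableSet.cylinder (α := fun _ : I => X₀) s hS
  refine ⟨cylinder s S, _ ⁻¹' cylinder s S, hcyl, (hshift g).measurable hcyl,
    infinitePi_cylinder_inter_preimage_comp_eq_mul μ₀ hg hS hS, hAS, ?_⟩
  exact ((hshift g).measure_symmDiff_preimage_le hAg
    (hA.symmDiff hcyl).nullMeasurableSet).trans_lt hAS

/-- if a countable group `Γ` acts on a countable set `I` with all orbits
infinite, then the generalized Bernoulli action `(g · x)_i = x_{g⁻¹ · i}` on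
`(X₀^I, μ₀^{⊗I})` is measure preserving and ergodic. -/
theorem stmt6 (Γ : Type*) [Group Γ] [Countable Γ]
    (I : Type*) [Countable I] [MulAction Γ I]
    (horb : ∀ i : I, (MulAction.orbit Γ i).Infinite)
    (X₀ : Type*) [MeasurableSpace X₀] [StandardBorelSpace X₀]
    (μ₀ : Measure X₀) [IsProbabilityMeasure μ₀]
    (μ : Measure (I → X₀)) (hμ : IsProductMeasure μ₀ μ) :
    (∀ g : Γ, MeasurePreserving (fun (x : I → X₀) (i : I) => x (g⁻¹ • i)) μ μ) ∧
    (∀ A : Set (I → X₀), MeasurableSet A →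
      (∀ g : Γ, μ (symmDiff ((fun (x : I → X₀) (i : I) => x (g⁻¹ • i)) '' A) A) = 0) →
      μ A = 0 ∨ μ A = 1) :=
  stmt6_general Γ I horb X₀ μ₀ μ hμ
end

section
/- Consider the action of SL₂(ℤ) on the 2-torus 𝕋² = ℝ²/ℤ² induced by the linear action of integer matrices on ℝ², with 𝕋² equipped with its Haar (Lebesgue) probability measure λ². Then this action is measure preserving, essentially free (for λ²-almost every z ∈ 𝕋², A·z ≠ z for every A ∈ SL₂(ℤ) with A ≠ I), and ergodic (every measurable A ⊆ 𝕋² with λ²(g·A Δ A) = 0 for all g ∈ SL₂(ℤ) satisfies λ²(A) ∈ {0,1}). -/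
/-!
Measure preservation: each `A ∈ SL₂(ℤ)` acts by a continuous surjective endomorphism of the
compact group `𝕋²`, hence preserves Haar measure. Freeness: the fixed points of `A ≠ 1` lie in
the kernel of a nonzero character `(x, y) ↦ a • x + b • y`, a null set. Ergodicity uses only the
two elementary shears. On the vertical fibre over `x`, the shear `(x, y) ↦ (x, y + x)` acts as
rotation by `x`, which is ergodic for almost every `x`; so an invariant set has a.e. null or
conull fibres and agrees a.e. with some `A ×ˢ univ`. The transposed shear gives `univ ×ˢ B`
in the same way, and `A ×ˢ univ =ᵐ univ ×ˢ B` forces `μ A = 0` or `μ Bᶜ = 0`.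
-/

open MeasureTheory

/-- The 2-torus `𝕋² = ℝ²/ℤ²` as a product of two unit circles `ℝ/ℤ`. -/
abbrev Torus2 : Type := AddCircle (1 : ℝ) × AddCircle (1 : ℝ)

/-- The linear action of `SL₂(ℤ)` on the torus `𝕋² = ℝ²/ℤ²`. -/
noncomputable def sl2Act (A : Matrix.SpecialLinearGroup (Fin 2) ℤ) (p : Torus2) : Torus2 :=
  ((A : Matrix (Fin 2) (Fin 2) ℤ) 0 0 • p.1 + (A : Matrix (Fin 2) (Fin 2) ℤ) 0 1 • p.2,
   (A : Matrix (Fin 2) (Fin 2) ℤ) 1 0 • p.1 + (A : Matrix (Fin 2) (Fin 2) ℤ) 1 1 • p.2)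

open Set Filter Function

instance {m n α : Type*} [Finite m] [Finite n] [Countable α] : Countable (Matrix m n α) :=
  inferInstanceAs (Countable (m → n → α))

instance {n R : Type*} [Fintype n] [DecidableEq n] [CommRing R] [Countable R] :
    Countable (Matrix.SpecialLinearGroup n R) :=
  inferInstanceAs (Countable {A : Matrix n n R // A.det = 1})

section Prod

variable {α β : Type*} [MeasurableSpace α] [MeasurableSpace β] {μ : Measure α} {ν : Measure β}
  [SFinite ν]

theorem exists_ae_eq_prod_univ_of_ae_eventuallyConst_fiber {S : Set (α × β)}
    (hS : MeasurableSet S) (h : ∀ᵐ x ∂μ, EventuallyConst (Prod.mk x ⁻¹' S) (ae ν)) :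
    ∃ A : Set α, S =ᵐ[μ.prod ν] A ×ˢ (univ : Set β) := by
  classical
  set A := {x | ν (Prod.mk x ⁻¹' S)ᶜ = 0}
  have hA : MeasurableSet A := measurable_measure_prodMk_left hS.compl (measurableSet_singleton 0)
  refine ⟨A, ?_⟩
  rw [← measure_symmDiff_eq_zero_iff, Measure.measure_prod_null (hS.symmDiff (hA.prod .univ))]
  filter_upwards [h] with x hx
  rw [Pi.zero_apply, preimage_symmDiff, measure_symmDiff_eq_zero_iff, mk_preimage_prod_right_eq_if]
  split_ifs with hxA
  · exact ae_eq_univ.2 hxA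
  · exact (eventuallyConst_set'.1 hx).resolve_right (mt ae_eq_univ.1 hxA)

theorem eventuallyConst_of_ae_eq_prod_univ_of_ae_eq_univ_prod {S : Set (α × β)} {A : Set α}
    {B : Set β} (hA : S =ᵐ[μ.prod ν] A ×ˢ univ) (hB : S =ᵐ[μ.prod ν] univ ×ˢ B) :
    EventuallyConst S (ae (μ.prod ν)) := by
  have hAB : μ A * ν Bᶜ = 0 := by
    rw [← Measure.prod_prod]
    refine measure_mono_null (fun z hz => ?_) (ae_eq_set.1 (hA.symm.trans hB)).1
    exact ⟨⟨hz.1, trivial⟩, fun h => hz.2 h.2⟩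
  rw [eventuallyConst_set']
  rcases mul_eq_zero.1 hAB with h | h
  · left
    simpa using hA.trans (Measure.set_prod_ae_eq (ae_eq_empty.2 h) (EventuallyEq.refl _ univ))
  · right
    simpa using hB.trans (Measure.set_prod_ae_eq (EventuallyEq.refl _ univ) (ae_eq_univ.2 h))

end Prod

namespace AddCircle

variable {p : ℝ} [Fact (0 < p)]

instance : NullSingletonClass (volume : Measure (AddCircle p)) :=
  ⟨fun x => by simpa using volume_closedBall p (x := x) 0⟩

theorem ae_addOrderOf_eq_zero : ∀ᵐ x : AddCircle p, addOrderOf x = 0 := by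
  have : {x : AddCircle p | ¬addOrderOf x = 0} = ⋃ n : ℕ, {x | addOrderOf x = n + 1} := by
    ext x
    simp only [mem_ofPred_eq, mem_iUnion]
    exact ⟨fun h => ⟨_, (Nat.succ_pred_eq_of_ne_zero h).symm⟩, by rintro ⟨n, hn⟩; omega⟩
  rw [ae_iff, this, measure_iUnion_null_iff]
  exact fun n => (finite_setOfPred_addOrderOf_eq p n.succ_pos).measure_zero _

theorem ae_eventuallyConst_fiber_of_preimage_shear_ae_eq {S : Set (AddCircle p × AddCircle p)}
    (hS : MeasurableSet S) (h : (fun q => (q.1, q.2 + q.1)) ⁻¹' S =ᵐ[volume] S) :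
    ∀ᵐ x, EventuallyConst (Prod.mk x ⁻¹' S) (ae volume) := by
  filter_upwards [Measure.ae_ae_of_ae_prod h, ae_addOrderOf_eq_zero] with x hfiber hx
  exact (ergodic_add_right.2 hx).quasiErgodic.aeconst_set₀
    (measurable_prodMk_left hS).nullMeasurableSet hfiber

theorem eventuallyConst_of_preimage_shears_ae_eq {S : Set (AddCircle p × AddCircle p)}
    (hS : MeasurableSet S) (hlower : (fun q => (q.1, q.2 + q.1)) ⁻¹' S =ᵐ[volume] S)
    (hupper : (fun q => (q.1 + q.2, q.2)) ⁻¹' S =ᵐ[volume] S) :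
    EventuallyConst S (ae volume) := by
  obtain ⟨A, hA⟩ := exists_ae_eq_prod_univ_of_ae_eventuallyConst_fiber hS
    (ae_eventuallyConst_fiber_of_preimage_shear_ae_eq hS hlower)
  have hswap : MeasurePreserving (Prod.swap : AddCircle p × AddCircle p → _) volume volume :=
    Measure.measurePreserving_swap
  -- conjugating by the swap exchanges the two shears
  have hS' : MeasurableSet (Prod.swap ⁻¹' S) := hS.preimage measurable_swap
  obtain ⟨B, hB⟩ := exists_ae_eq_prod_univ_of_ae_eventuallyConst_fiber hS'
    (ae_eventuallyConst_fiber_of_preimage_shear_ae_eq hS'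
      (hswap.quasiMeasurePreserving.preimage_ae_eq hupper))
  have hB' : S =ᵐ[volume] univ ×ˢ B := by
    simpa [preimage_preimage] using hswap.quasiMeasurePreserving.preimage_ae_eq hB
  exact eventuallyConst_of_ae_eq_prod_univ_of_ae_eq_univ_prod hA hB'

end AddCircle

instance : IsProbabilityMeasure (volume : Measure UnitAddCircle) := ⟨by simp⟩

instance : Measure.IsAddHaarMeasure (volume : Measure Torus2) :=
  inferInstanceAs (Measure.IsAddHaarMeasure ((volume : Measure UnitAddCircle).prod volume))

theorem measurePreserving_zsmul_add_zsmul {a b : ℤ} (hab : a ≠ 0 ∨ b ≠ 0) :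
    MeasurePreserving (fun q : Torus2 => a • q.1 + b • q.2) volume volume := by
  let f : Torus2 →+ UnitAddCircle := a • AddMonoidHom.fst _ _ + b • AddMonoidHom.snd _ _
  have hsurj : Surjective f := by
    intro t
    rcases hab with ha | hb
    · obtain ⟨x, rfl⟩ := DivisibleBy.surjective_smul UnitAddCircle ℤ ha t
      exact ⟨(x, 0), by simp [f]⟩
    · obtain ⟨y, rfl⟩ := DivisibleBy.surjective_smul UnitAddCircle ℤ hb t
      exact ⟨(0, y), by simp [f]⟩
  have hcont : Continuous f := by
    show Continuous fun q : Torus2 => a • q.1 + b • q.2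
    fun_prop
  exact f.measurePreserving hcont hsurj (by simp)

theorem measure_setOf_zsmul_add_zsmul_eq_zero {a b : ℤ} (hab : a ≠ 0 ∨ b ≠ 0) :
    volume {q : Torus2 | a • q.1 + b • q.2 = 0} = 0 :=
  ((measurePreserving_zsmul_add_zsmul hab).measure_preimage
    (measurableSet_singleton 0).nullMeasurableSet).trans (measure_singleton 0)

noncomputable instance : MulAction (Matrix.SpecialLinearGroup (Fin 2) ℤ) Torus2 where
  smul := sl2Act
  one_smul p := by
    show sl2Act 1 p = p
    simp [sl2Act]
  mul_smul A B p := by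
    show sl2Act (A * B) p = sl2Act A (sl2Act B p)
    simp only [sl2Act, Matrix.SpecialLinearGroup.coe_mul, Matrix.mul_apply,
      Fin.sum_univ_two, add_smul, mul_smul, smul_add, Prod.mk.injEq]
    constructor <;> abel

theorem sl2Act_eq_smul (A : Matrix.SpecialLinearGroup (Fin 2) ℤ) : sl2Act A = (A • ·) := rfl

theorem measurePreserving_sl2Act (A : Matrix.SpecialLinearGroup (Fin 2) ℤ) :
    MeasurePreserving (sl2Act A) volume volume := by
  let M := (A : Matrix (Fin 2) (Fin 2) ℤ)
  let f : Torus2 →+ Torus2 := AddMonoidHom.prod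
    (M 0 0 • AddMonoidHom.fst _ _ + M 0 1 • AddMonoidHom.snd _ _)
    (M 1 0 • AddMonoidHom.fst _ _ + M 1 1 • AddMonoidHom.snd _ _)
  have hcont : Continuous f := by
    show Continuous (sl2Act A)
    unfold sl2Act
    fun_prop
  exact f.measurePreserving hcont (MulAction.surjective A) rfl

theorem measure_fixedPoints_sl2Act {A : Matrix.SpecialLinearGroup (Fin 2) ℤ} (hA : A ≠ 1) :
    volume (fixedPoints (sl2Act A)) = 0 := by
  set M := (A : Matrix (Fin 2) (Fin 2) ℤ)
  have hrow : (M 0 0 - 1 ≠ 0 ∨ M 0 1 ≠ 0) ∨ (M 1 0 ≠ 0 ∨ M 1 1 - 1 ≠ 0) := by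
    contrapose! hA
    ext i j
    fin_cases i <;> fin_cases j <;> simp [M] at hA ⊢ <;> omega
  rcases hrow with h | h
  · refine measure_mono_null (fun q hq => ?_) (measure_setOf_zsmul_add_zsmul_eq_zero h)
    have : M 0 0 • q.1 + M 0 1 • q.2 = q.1 := congrArg Prod.fst hq
    show (M 0 0 - 1) • q.1 + M 0 1 • q.2 = 0
    rw [sub_smul, one_smul, sub_add_eq_add_sub, this, sub_self]
  · refine measure_mono_null (fun q hq => ?_) (measure_setOf_zsmul_add_zsmul_eq_zero h)
    have : M 1 0 • q.1 + M 1 1 • q.2 = q.2 := congrArg Prod.snd hq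
    show M 1 0 • q.1 + (M 1 1 - 1) • q.2 = 0
    rw [sub_smul, one_smul, ← add_sub_assoc, this, sub_self]

theorem ae_forall_sl2Act_ne_self :
    ∀ᵐ p : Torus2, ∀ A : Matrix.SpecialLinearGroup (Fin 2) ℤ, A ≠ 1 → sl2Act A p ≠ p := by
  refine ae_all_iff.2 fun A => ?_
  by_cases hA : A = 1
  · exact ae_of_all _ fun _ h => absurd hA h
  · exact (measure_eq_zero_iff_ae_notMem.1 (measure_fixedPoints_sl2Act hA)).mono fun _ hp _ => hp

theorem eventuallyConst_of_forall_image_sl2Act_ae_eq {S : Set Torus2} (hS : MeasurableSet S)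
    (h : ∀ A : Matrix.SpecialLinearGroup (Fin 2) ℤ, sl2Act A '' S =ᵐ[volume] S) :
    EventuallyConst S (ae volume) := by
  have hpre (A : Matrix.SpecialLinearGroup (Fin 2) ℤ) : sl2Act A ⁻¹' S =ᵐ[volume] S := by
    simpa [sl2Act_eq_smul, image_smul, ← preimage_smul_inv] using h A⁻¹
  have hlower : sl2Act ⟨!![1, 0; 1, 1], by simp [Matrix.det_fin_two_of]⟩ =
      fun q => (q.1, q.2 + q.1) := by
    funext q; simp [sl2Act, add_comm]
  have hupper : sl2Act ⟨!![1, 1; 0, 1], by simp [Matrix.det_fin_two_of]⟩ =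
      fun q => (q.1 + q.2, q.2) := by
    funext q; simp [sl2Act]
  exact AddCircle.eventuallyConst_of_preimage_shears_ae_eq hS (hlower ▸ hpre _) (hupper ▸ hpre _)

/-- the action of `SL₂(ℤ)` on `𝕋²` with its Haar (Lebesgue) probability
measure is measure preserving, essentially free and ergodic. -/
theorem stmt11 :
    (∀ A : Matrix.SpecialLinearGroup (Fin 2) ℤ,
      MeasurePreserving (sl2Act A) (volume : Measure Torus2) volume) ∧
    (∀ᵐ p ∂(volume : Measure Torus2),
      ∀ A : Matrix.SpecialLinearGroup (Fin 2) ℤ, A ≠ 1 → sl2Act A p ≠ p) ∧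
    (∀ S : Set Torus2, MeasurableSet S →
      (∀ A : Matrix.SpecialLinearGroup (Fin 2) ℤ, volume (symmDiff (sl2Act A '' S) S) = 0) →
      volume S = 0 ∨ volume S = 1) := by
  refine ⟨measurePreserving_sl2Act, ae_forall_sl2Act_ne_self, fun S hS hinv => ?_⟩
  rcases eventuallyConst_set'.1 (eventuallyConst_of_forall_image_sl2Act_ae_eq hS
    fun A => measure_symmDiff_eq_zero_iff.1 (hinv A)) with h | h
  · exact Or.inl (ae_eq_empty.1 h)
  · exact Or.inr (by rw [measure_congr h, measure_univ])
end

section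
/- Let Γ₁ and Γ₂ be nontrivial countable groups and let Γ = Γ₁ * Γ₂ be their free product. Let λ : Γ → O(ℓ²_ℝ(Γ)) be the left regular orthogonal representation, (λ(g)f)(h) = f(g⁻¹h). Then there exists an unbounded 1-cocycle for λ: a map c : Γ → ℓ²_ℝ(Γ) satisfying c(gh) = c(g) + λ(g)c(h) for all g,h ∈ Γ, with sup_{g∈Γ} ‖c(g)‖ = ∞. -/
/-!
Let `f` be the indicator of the elements of `Γ₁ ∗ Γ₂` whose reduced word ends with a letter of
`Γ₂`. Left multiplication by a letter `u` changes the last letter of `x` only for `x ∈ {1, u⁻¹}`,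
so `λ(g) f - f` is finitely supported for every `g`, and `c g = λ(g) f - f` is a cocycle with
values in `ℓ²`. For `z = a b` with `a ∈ Γ₁`, `b ∈ Γ₂` nontrivial, `f (z ^ k) = 1` and
`f (z ^ (-m)) = 0` for `k, m ≥ 1`, so `c (z ^ (N + 1))` has absolute value `1` at the `N` distinct
points `z, …, z ^ N` and `‖c (z ^ (N + 1))‖² ≥ N`.
-/

open scoped Monoid

section FiniteDefect

variable {G β : Type*} [Group G]

def FiniteDefect (f : G → β) (g : G) : Prop := {x | f (g * x) ≠ f x}.Finite

theorem finiteDefect_one (f : G → β) : FiniteDefect f 1 := by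
  simp [FiniteDefect]

theorem FiniteDefect.mul {f : G → β} {g h : G} (hg : FiniteDefect f g) (hh : FiniteDefect f h) :
    FiniteDefect f (g * h) := by
  refine ((hg.preimage (mul_right_injective h).injOn).union hh).subset fun x hx => ?_
  by_contra hno
  simp only [Set.mem_union, Set.mem_preimage, Set.mem_ofPred_eq, not_or, not_not] at hno
  exact hx (by rw [mul_assoc, hno.1, hno.2])

theorem FiniteDefect.comp {γ : Type*} {f : G → β} {g : G} (hg : FiniteDefect f g) (φ : β → γ) :
    FiniteDefect (φ ∘ f) g :=
  hg.subset fun _ hx h => hx (congrArg φ h)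

theorem FiniteDefect.comp_mulEquiv {H : Type*} [Group H] {f : H → β} (e : G ≃* H) {g : G}
    (hg : FiniteDefect f (e g)) : FiniteDefect (f ∘ e) g := by
  refine (hg.preimage e.injective.injOn).subset fun x hx => ?_
  simpa [map_mul] using hx

end FiniteDefect

section DefectCocycle

variable {G : Type*} [Group G]

noncomputable def defectCocycle (f : G → ℝ) (hf : ∀ g, FiniteDefect f g) (g : G) :
    lp (fun _ : G => ℝ) 2 :=
  ⟨fun x => f (g⁻¹ * x) - f x,
    (memℓp_zero ((hf g⁻¹).subset fun _ hx h => hx (sub_eq_zero.mpr h))).of_exponent_ge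
      (by norm_num)⟩

theorem defectCocycle_apply (f : G → ℝ) (hf : ∀ g, FiniteDefect f g) (g x : G) :
    defectCocycle f hf g x = f (g⁻¹ * x) - f x :=
  rfl

theorem defectCocycle_mul_apply (f : G → ℝ) (hf : ∀ g, FiniteDefect f g) (g h x : G) :
    defectCocycle f hf (g * h) x = defectCocycle f hf g x + defectCocycle f hf h (g⁻¹ * x) := by
  simp only [defectCocycle_apply, mul_inv_rev, mul_assoc]
  ring

theorem card_le_norm_sq {α : Type*} (v : lp (fun _ : α => ℝ) 2) (s : Finset α)
    (hs : ∀ x ∈ s, 1 ≤ |v x|) : (s.card : ℝ) ≤ ‖v‖ ^ 2 := by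
  have h2 : (2 : ENNReal).toReal = 2 := by norm_num
  calc (s.card : ℝ) = ∑ _x ∈ s, (1 : ℝ) := by simp
    _ ≤ ∑ x ∈ s, ‖v x‖ ^ (2 : ENNReal).toReal := Finset.sum_le_sum fun x hx => by
        rw [h2, Real.rpow_two, Real.norm_eq_abs]
        exact one_le_pow₀ (hs x hx)
    _ ≤ ‖v‖ ^ (2 : ENNReal).toReal := lp.sum_rpow_le_norm_rpow (by rw [h2]; norm_num) v s
    _ = ‖v‖ ^ 2 := by rw [h2, Real.rpow_two]

theorem not_bddAbove_norm_defectCocycle (f : G → ℝ) (hf : ∀ g, FiniteDefect f g) (z : G)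
    (hz : ∀ k m : ℕ, 0 < k → 0 < m → 1 ≤ |f (z ^ m)⁻¹ - f (z ^ k)|) :
    ¬ BddAbove (Set.range fun g => ‖defectCocycle f hf g‖) := by
  classical
  rintro ⟨M, hM⟩
  have hz_infinite : ¬ IsOfFinOrder z := fun hfin => by
    obtain ⟨p, hp, hzp⟩ := isOfFinOrder_iff_pow_eq_one.mp hfin
    exact absurd (hz p p hp hp) (by simp [hzp])
  obtain ⟨N, hN⟩ := exists_nat_gt (M ^ 2)
  have hcard : (N : ℝ) ≤ ‖defectCocycle f hf (z ^ (N + 1))‖ ^ 2 := by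
    have := card_le_norm_sq (defectCocycle f hf (z ^ (N + 1)))
      ((Finset.Icc 1 N).image (z ^ ·)) ?_
    · rwa [Finset.card_image_of_injective _ (injective_pow_iff_not_isOfFinOrder.mpr hz_infinite),
        Nat.card_Icc, Nat.add_sub_cancel] at this
    simp only [Finset.mem_image, Finset.mem_Icc, forall_exists_index, and_imp]
    rintro _ k hk1 hkN rfl
    rw [defectCocycle_apply, ← pow_mul_pow_sub z (show k ≤ N + 1 by omega), mul_inv_rev,
      inv_mul_cancel_right]
    exact hz k (N + 1 - k) hk1 (by omega)
  have hM0 : 0 ≤ M := (norm_nonneg _).trans (hM ⟨1, rfl⟩)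
  nlinarith [hM ⟨z ^ (N + 1), rfl⟩, norm_nonneg (defectCocycle f hf (z ^ (N + 1)))]

end DefectCocycle

namespace Monoid.CoprodI

variable {ι : Type*} {G : ι → Type*} [∀ i, Group (G i)]

def NeWord.pow {i j : ι} (w : NeWord G i j) (hij : j ≠ i) : ℕ → NeWord G i j
  | 0 => w
  | n + 1 => append w hij (w.pow hij n)

theorem NeWord.pow_prod {i j : ι} (w : NeWord G i j) (hij : j ≠ i) (n : ℕ) :
    (w.pow hij n).prod = w.prod ^ (n + 1) := by
  induction n with
  | zero => simp [pow]
  | succ n ih => rw [pow, append_prod, ih, ← pow_succ']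

theorem NeWord.of_mul_prod_eq_one_or [DecidableEq ι] {i : ι} (u : G i) :
    ∀ {k j : ι} (w : NeWord G k j),
      of u * w.prod = 1 ∨ ∃ (k' : ι) (v : NeWord G k' j), of u * w.prod = v.prod
  | k, _, singleton x hx => by
    by_cases hik : i = k
    · subst hik
      by_cases hux : u * x = 1
      · left; rw [prod_singleton, ← map_mul, hux, map_one]
      · right; exact ⟨i, singleton (u * x) hux, by rw [prod_singleton, prod_singleton, map_mul]⟩
    · by_cases hu : u = 1
      · right; exact ⟨k, singleton x hx, by rw [hu, map_one, one_mul]⟩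
      · right; exact ⟨i, append (singleton u hu) hik (singleton x hx), by simp⟩
  | _, _, append w₁ hne w₂ => by
    right
    rcases of_mul_prod_eq_one_or u w₁ with h | ⟨k', v, h⟩
    · exact ⟨_, w₂, by rw [append_prod, ← mul_assoc, h, one_mul]⟩
    · exact ⟨k', append v hne w₂, by rw [append_prod, append_prod, ← mul_assoc, h]⟩

variable [DecidableEq ι] [∀ i, DecidableEq (G i)]

def lastIdx (x : CoprodI G) : Option ι := ((Word.equiv x).toList.getLast?).map Sigma.fst

namespace NeWord

theorem equiv_prod {i j : ι} (w : NeWord G i j) : Word.equiv w.prod = w.toWord :=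
  Word.equiv.apply_symm_apply w.toWord

theorem lastIdx_prod {i j : ι} (w : NeWord G i j) : lastIdx w.prod = some j := by
  simp [lastIdx, equiv_prod, toWord]

theorem exists_prod_eq {x : CoprodI G} (hx : x ≠ 1) :
    ∃ (i j : ι) (w : NeWord G i j), w.prod = x := by
  obtain ⟨i, j, w, hw⟩ := of_word (Word.equiv x) fun h => hx (by
    rw [← Word.equiv.symm_apply_apply x, h]; exact Word.prod_empty)
  exact ⟨i, j, w, by rw [← Word.equiv.injective.eq_iff, equiv_prod, hw]⟩

theorem lastIdx_prod_pow {i j : ι} (w : NeWord G i j) (hij : j ≠ i) {n : ℕ} (hn : n ≠ 0) :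
    lastIdx (w.prod ^ n) = some j := by
  obtain ⟨n, rfl⟩ := Nat.exists_eq_succ_of_ne_zero hn
  rw [← pow_prod w hij, lastIdx_prod]

theorem lastIdx_prod_pow_inv {i j : ι} (w : NeWord G i j) (hij : j ≠ i) {n : ℕ} (hn : n ≠ 0) :
    lastIdx (w.prod ^ n)⁻¹ = some i := by
  obtain ⟨n, rfl⟩ := Nat.exists_eq_succ_of_ne_zero hn
  rw [← pow_prod w hij, ← inv_prod, lastIdx_prod]

end NeWord

theorem lastIdx_of_mul {i : ι} (u : G i) {x : CoprodI G} (hx : x ≠ 1) (hux : of u * x ≠ 1) :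
    lastIdx (of u * x) = lastIdx x := by
  obtain ⟨k, j, w, rfl⟩ := NeWord.exists_prod_eq hx
  obtain ⟨k', v, hv⟩ := (NeWord.of_mul_prod_eq_one_or u w).resolve_left hux
  rw [hv, NeWord.lastIdx_prod, NeWord.lastIdx_prod]

theorem finiteDefect_lastIdx (g : CoprodI G) : FiniteDefect lastIdx g := by
  induction g using CoprodI.induction_on with
  | one => exact finiteDefect_one _
  | of i u =>
    refine (Set.toFinite {1, of u⁻¹}).subset fun x hx => ?_
    by_contra hno
    simp only [Set.mem_insert_iff, Set.mem_singleton_iff, not_or] at hno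
    exact hx (lastIdx_of_mul u hno.1 fun h => hno.2 (by
      rw [map_inv, eq_inv_of_mul_eq_one_right h]))
  | mul g h hg hh => exact hg.mul hh

end Monoid.CoprodI

universe u v

namespace Monoid.Coprod

open Monoid.CoprodI

-- Viewing `M ∗ N` as a `Bool`-indexed coproduct gives access to the reduced words of `CoprodI`.
def boolFamily (M : Type u) (N : Type v) : Bool → Type (max u v) :=
  fun b => Bool.rec (ULift.{v} M) (ULift.{u} N) b

variable {M : Type u} {N : Type v} [Group M] [Group N]

instance (b : Bool) : Group (boolFamily M N b) :=
  Bool.rec (inferInstanceAs (Group (ULift M))) (inferInstanceAs (Group (ULift N))) b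

def mulEquivCoprodI : M ∗ N ≃* CoprodI (boolFamily M N) :=
  MonoidHom.toMulEquiv
    (lift ((of (M := boolFamily M N) (i := false)).comp MulEquiv.ulift.symm.toMonoidHom)
      ((of (M := boolFamily M N) (i := true)).comp MulEquiv.ulift.symm.toMonoidHom))
    (CoprodI.lift fun b => Bool.rec (inl.comp MulEquiv.ulift.toMonoidHom)
      (inr.comp MulEquiv.ulift.toMonoidHom) b)
    (hom_ext (MonoidHom.ext fun _ => rfl) (MonoidHom.ext fun _ => rfl))
    (CoprodI.ext_hom _ _ fun b => by cases b <;> exact MonoidHom.ext fun _ => rfl)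

theorem exists_neWord_mulEquivCoprodI_inl_mul_inr {a : M} {b : N} (ha : a ≠ 1) (hb : b ≠ 1) :
    ∃ w : NeWord (boolFamily M N) false true, mulEquivCoprodI (inl a * inr b) = w.prod :=
  ⟨.append (.singleton (ULift.up a) fun h => ha (congrArg ULift.down h)) Bool.false_ne_true
    (.singleton (ULift.up b) fun h => hb (congrArg ULift.down h)),
    by rw [NeWord.append_prod, map_mul]; rfl⟩

open Classical in
noncomputable def endsInRightIndicator (x : M ∗ N) : ℝ :=
  if lastIdx (mulEquivCoprodI x) = some true then 1 else 0

theorem finiteDefect_endsInRightIndicator (g : M ∗ N) :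
    FiniteDefect endsInRightIndicator g := by
  classical
  exact ((finiteDefect_lastIdx (mulEquivCoprodI g)).comp
    fun o => if o = some true then 1 else 0).comp_mulEquiv mulEquivCoprodI

theorem endsInRightIndicator_pow {a : M} {b : N} (ha : a ≠ 1) (hb : b ≠ 1) {n : ℕ}
    (hn : n ≠ 0) : endsInRightIndicator ((inl a * inr b) ^ n) = 1 := by
  classical
  obtain ⟨w, hw⟩ := exists_neWord_mulEquivCoprodI_inl_mul_inr ha hb
  rw [endsInRightIndicator, map_pow, hw, NeWord.lastIdx_prod_pow _ (by decide) hn, if_pos rfl]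

theorem endsInRightIndicator_pow_inv {a : M} {b : N} (ha : a ≠ 1) (hb : b ≠ 1) {n : ℕ}
    (hn : n ≠ 0) : endsInRightIndicator ((inl a * inr b) ^ n)⁻¹ = 0 := by
  classical
  obtain ⟨w, hw⟩ := exists_neWord_mulEquivCoprodI_inl_mul_inr ha hb
  rw [endsInRightIndicator, map_inv, map_pow, hw, NeWord.lastIdx_prod_pow_inv _ (by decide) hn,
    if_neg (by simp)]

end Monoid.Coprod

theorem stmt14_general (Γ₁ Γ₂ : Type*) [Group Γ₁] [Group Γ₂]
    [Nontrivial Γ₁] [Nontrivial Γ₂] :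
    ∃ c : Monoid.Coprod Γ₁ Γ₂ → lp (fun _ : Monoid.Coprod Γ₁ Γ₂ => ℝ) 2,
      (∀ g h k : Monoid.Coprod Γ₁ Γ₂, c (g * h) k = c g k + c h (g⁻¹ * k)) ∧
      ¬ BddAbove (Set.range fun g : Monoid.Coprod Γ₁ Γ₂ => ‖c g‖) := by
  obtain ⟨a, ha⟩ := exists_ne (1 : Γ₁)
  obtain ⟨b, hb⟩ := exists_ne (1 : Γ₂)
  have hf := Monoid.Coprod.finiteDefect_endsInRightIndicator (M := Γ₁) (N := Γ₂)
  refine ⟨defectCocycle _ hf, defectCocycle_mul_apply _ hf,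
    not_bddAbove_norm_defectCocycle _ hf (.inl a * .inr b) fun k m hk hm => ?_⟩
  rw [Monoid.Coprod.endsInRightIndicator_pow_inv ha hb hm.ne',
    Monoid.Coprod.endsInRightIndicator_pow ha hb hk.ne']
  norm_num

/-- the free product `Γ = Γ₁ ∗ Γ₂` of two nontrivial countable groups
admits an unbounded 1-cocycle `c : Γ → ℓ²_ℝ(Γ)` for the left regular orthogonal
representation `(λ(g)f)(h) = f(g⁻¹h)`; the cocycle identity `c(gh) = c(g) + λ(g)c(h)`
is expressed pointwise. -/
theorem stmt14 (Γ₁ Γ₂ : Type*) [Group Γ₁] [Group Γ₂] [Countable Γ₁] [Countable Γ₂]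
    [Nontrivial Γ₁] [Nontrivial Γ₂] :
    ∃ c : Monoid.Coprod Γ₁ Γ₂ → lp (fun _ : Monoid.Coprod Γ₁ Γ₂ => ℝ) 2,
      (∀ g h k : Monoid.Coprod Γ₁ Γ₂, c (g * h) k = c g k + c h (g⁻¹ * k)) ∧
      ¬ BddAbove (Set.range fun g : Monoid.Coprod Γ₁ Γ₂ => ‖c g‖) :=
  stmt14_general Γ₁ Γ₂
end
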